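/- arXiv:2501.09467 — 2 statements merged into one kernel-verified Lean document; each statement's English description precedes it below -/
import Mathlib

section
/- Let X be a set of feasible routing solutions and B a budget. Let (d₁,f₁) ∈ X with 0 ≤ s₁ ≤ 1, t₁ ≥ 0 and s₁·f₁ − t₁·d₁ = B, and let (d₂,f₂) ∈ X be lower-level optimal for a policy (s₂,t₂) with 0 ≤ s₂ ≤ 1, t₂ ≥ 0, (s₂,t₂) ≠ (0,0), and s₂·f₂ − t₂·d₂ = B. If d₁ < d₂, then (1+t₁)·d₁ + (1−s₁)·f₁ > (1+t₂)·d₂ + (1−s₂)·f₂, i.e., a strictly smaller driven distance forces a strictly larger freight forwarder cost under a common budget. -/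
/-!
Under the budget constraint `s f - t d = B` the forwarder's cost `(1+t) d + (1-s) f` equals
`d + f - B`, so comparing costs under a common budget amounts to comparing `d + f`.
Optimality of `(d₂, f₂)` against `(d₁, f₁)` reads `(1+t₂)(d₂-d₁) ≤ (1-s₂)(f₁-f₂)`; with
`d₁ < d₂` this forces `f₁ - f₂ > 0`, and then `(d₂-d₁) + t₂(d₂-d₁) + s₂(f₁-f₂) ≤ f₁ - f₂`
with a strictly positive middle term because `(s₂, t₂) ≠ (0, 0)`.
-/

lemma cost_eq_add_sub_budget {s t d f B : ℝ} (hB : s * f - t * d = B) :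
    (1 + t) * d + (1 - s) * f = d + f - B := by
  linarith

lemma add_lt_add_of_cost_le_of_lt {s t d₁ f₁ d₂ f₂ : ℝ}
    (hs : 0 ≤ s) (hs' : s ≤ 1) (ht : 0 ≤ t) (hne : (s, t) ≠ (0, 0))
    (hcost : (1 + t) * d₂ + (1 - s) * f₂ ≤ (1 + t) * d₁ + (1 - s) * f₁)
    (hlt : d₁ < d₂) :
    d₂ + f₂ < d₁ + f₁ := by
  have hd : 0 < d₂ - d₁ := sub_pos.mpr hlt
  have hcost' : (1 + t) * (d₂ - d₁) ≤ (1 - s) * (f₁ - f₂) := by linarith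
  have hf : 0 < f₁ - f₂ :=
    pos_of_mul_pos_right ((mul_pos (by linarith) hd).trans_le hcost') (by linarith)
  have hpos : 0 < t * (d₂ - d₁) + s * (f₁ - f₂) := by
    rw [Ne, Prod.mk.injEq, not_and_or] at hne
    rcases hne with hs0 | ht0
    · exact add_pos_of_nonneg_of_pos (mul_nonneg ht hd.le) (mul_pos (hs.lt_of_ne' hs0) hf)
    · exact add_pos_of_pos_of_nonneg (mul_pos (ht.lt_of_ne' ht0) hd) (mul_nonneg hs hf.le)
  linarith

theorem stmt3_general (X : Set (ℝ × ℝ))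
    (B : ℝ)
    (s₁ t₁ d₁ f₁ s₂ t₂ d₂ f₂ : ℝ)
    (hs₂ : 0 ≤ s₂) (hs₂' : s₂ ≤ 1) (ht₂ : 0 ≤ t₂)
    (hne₂ : (s₂, t₂) ≠ ((0 : ℝ), (0 : ℝ)))
    (hmem₁ : (d₁, f₁) ∈ X)
    (hB₁ : s₁ * f₁ - t₁ * d₁ = B)
    (hopt₂ : ∀ p ∈ X,
      (1 + t₂) * d₂ + (1 - s₂) * f₂ ≤ (1 + t₂) * p.1 + (1 - s₂) * p.2)
    (hB₂ : s₂ * f₂ - t₂ * d₂ = B)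
    (hlt : d₁ < d₂) :
    (1 + t₁) * d₁ + (1 - s₁) * f₁ > (1 + t₂) * d₂ + (1 - s₂) * f₂ := by
  have hsum := add_lt_add_of_cost_le_of_lt hs₂ hs₂' ht₂ hne₂ (hopt₂ (d₁, f₁) hmem₁) hlt
  rw [gt_iff_lt, cost_eq_add_sub_budget hB₁, cost_eq_add_sub_budget hB₂]
  linarith

/-- Under a common budget `B`, if `(d₁,f₁) ∈ X` satisfies the budget
constraint for a policy `(s₁,t₁)` and `(d₂,f₂) ∈ X` is lower-level optimal for
`(s₂,t₂)` (with `(s₂,t₂) ≠ (0,0)`) and satisfies the budget constraint, then a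
strictly smaller driven distance forces a strictly larger freight forwarder cost. -/
theorem stmt3 (X : Set (ℝ × ℝ)) (hX : X.Nonempty)
    (hXnn : ∀ p ∈ X, 0 ≤ p.1 ∧ 0 ≤ p.2)
    (B : ℝ)
    (s₁ t₁ d₁ f₁ s₂ t₂ d₂ f₂ : ℝ)
    (hs₁ : 0 ≤ s₁) (hs₁' : s₁ ≤ 1) (ht₁ : 0 ≤ t₁)
    (hs₂ : 0 ≤ s₂) (hs₂' : s₂ ≤ 1) (ht₂ : 0 ≤ t₂)
    (hne₂ : (s₂, t₂) ≠ ((0 : ℝ), (0 : ℝ)))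
    (hmem₁ : (d₁, f₁) ∈ X)
    (hB₁ : s₁ * f₁ - t₁ * d₁ = B)
    (hmem₂ : (d₂, f₂) ∈ X)
    (hopt₂ : ∀ p ∈ X,
      (1 + t₂) * d₂ + (1 - s₂) * f₂ ≤ (1 + t₂) * p.1 + (1 - s₂) * p.2)
    (hB₂ : s₂ * f₂ - t₂ * d₂ = B)
    (hlt : d₁ < d₂) :
    (1 + t₁) * d₁ + (1 - s₁) * f₁ > (1 + t₂) * d₂ + (1 - s₂) * f₂ :=
  stmt3_general X B s₁ t₁ d₁ f₁ s₂ t₂ d₂ f₂ hs₂ hs₂' ht₂ hne₂ hmem₁ hB₁ hopt₂ hB₂ hlt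
end

section
/- Under the optimal (full subsidy) policy, increasing the authority's budget does not change the freight forwarder's routing decision but decreases its total cost by exactly the budget increase: let X be a set of feasible routing solutions and, for i = 1,2, let (dᵢ,fᵢ) ∈ X be lower-level optimal for the policy (sᵢ,tᵢ) with s₁ = s₂ = 1, tᵢ ≥ 0, and budget constraints 1·fᵢ − tᵢ·dᵢ = Bᵢ, where B₁ < B₂; assume the lower-level problem is solved deterministically, so that f₁ = f₂. Writing Cᵢ := (1+tᵢ)·dᵢ + (1−sᵢ)·fᵢ for the freight forwarder's total cost, it holds that d₁ = d₂, B₁ + C₁ = B₂ + C₂, and, if d₁ > 0, then t₁ > t₂. -/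
/-!
With full subsidy the forwarder pays `(1 + t) d` for a solution `(d, f)`, so for every tax rate
`t > -1` it simply minimises the driven distance: all lower-level optima share the same `d`.
Independently of the policy, the subsidy balance plus the forwarder's cost is `f + d`, and with
`d` and `f` fixed the budget `f - t d` can only grow when the tax rate drops.
-/

/-- A solution is encoded as `q = (d, f)`: driven distance, then scheduled-line freight cost. -/
def IsLowerLevelOptimal (X : Set (ℝ × ℝ)) (s t : ℝ) (q : ℝ × ℝ) : Prop :=
  ∀ p ∈ X, (1 + t) * q.1 + (1 - s) * q.2 ≤ (1 + t) * p.1 + (1 - s) * p.2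

namespace IsLowerLevelOptimal

variable {X : Set (ℝ × ℝ)} {q q₁ q₂ : ℝ × ℝ} {t t₁ t₂ : ℝ}

theorem fst_le (h : IsLowerLevelOptimal X 1 t q) (ht : -1 < t) {p : ℝ × ℝ} (hp : p ∈ X) :
    q.1 ≤ p.1 := by
  have hcost := h p hp
  simp only [sub_self, zero_mul, add_zero] at hcost
  exact le_of_mul_le_mul_left hcost (by linarith)

theorem fst_eq (h₁ : IsLowerLevelOptimal X 1 t₁ q₁) (h₂ : IsLowerLevelOptimal X 1 t₂ q₂)
    (ht₁ : -1 < t₁) (ht₂ : -1 < t₂) (hq₁ : q₁ ∈ X) (hq₂ : q₂ ∈ X) : q₁.1 = q₂.1 :=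
  le_antisymm (h₁.fst_le ht₁ hq₂) (h₂.fst_le ht₂ hq₁)

end IsLowerLevelOptimal

theorem subsidy_sub_tax_add_cost (s t d f : ℝ) :
    s * f - t * d + ((1 + t) * d + (1 - s) * f) = f + d := by
  ring

theorem stmt11_general (X : Set (ℝ × ℝ))
    (s₁ t₁ d₁ f₁ s₂ t₂ d₂ f₂ B₁ B₂ C₁ C₂ : ℝ)
    (hs₁ : s₁ = 1) (hs₂ : s₂ = 1)
    (ht₁ : 0 ≤ t₁) (ht₂ : 0 ≤ t₂)
    (hmem₁ : (d₁, f₁) ∈ X)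
    (hopt₁ : ∀ p ∈ X,
      (1 + t₁) * d₁ + (1 - s₁) * f₁ ≤ (1 + t₁) * p.1 + (1 - s₁) * p.2)
    (hmem₂ : (d₂, f₂) ∈ X)
    (hopt₂ : ∀ p ∈ X,
      (1 + t₂) * d₂ + (1 - s₂) * f₂ ≤ (1 + t₂) * p.1 + (1 - s₂) * p.2)
    (hB₁ : s₁ * f₁ - t₁ * d₁ = B₁)
    (hB₂ : s₂ * f₂ - t₂ * d₂ = B₂)
    (hBlt : B₁ < B₂)
    (hdet : f₁ = f₂)
    (hC₁ : C₁ = (1 + t₁) * d₁ + (1 - s₁) * f₁)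
    (hC₂ : C₂ = (1 + t₂) * d₂ + (1 - s₂) * f₂) :
    d₁ = d₂ ∧ B₁ + C₁ = B₂ + C₂ ∧ (0 < d₁ → t₂ < t₁) := by
  subst hs₁ hs₂
  have hd : d₁ = d₂ := IsLowerLevelOptimal.fst_eq (q₁ := (d₁, f₁)) (q₂ := (d₂, f₂))
    hopt₁ hopt₂ (by linarith) (by linarith) hmem₁ hmem₂
  subst hd hdet hB₁ hB₂ hC₁ hC₂
  refine ⟨rfl, by rw [subsidy_sub_tax_add_cost, subsidy_sub_tax_add_cost], fun hd => ?_⟩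
  exact lt_of_mul_lt_mul_right (by linarith) hd.le

/-- Proposition 5: Under the optimal (full subsidy) policy, increasing
the budget does not change the routing decision but decreases the freight
forwarder's total cost by exactly the budget increase: with `s₁ = s₂ = 1`,
`tᵢ ≥ 0`, lower-level optimality, budget constraints `sᵢ·fᵢ − tᵢ·dᵢ = Bᵢ`,
`B₁ < B₂`, and deterministic lower level (`f₁ = f₂`), one has `d₁ = d₂`,
`B₁ + C₁ = B₂ + C₂` where `Cᵢ = (1+tᵢ)·dᵢ + (1−sᵢ)·fᵢ`, and if `d₁ > 0`
then `t₁ > t₂`. -/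
theorem stmt11 (X : Set (ℝ × ℝ)) (hX : X.Nonempty)
    (hXnn : ∀ p ∈ X, 0 ≤ p.1 ∧ 0 ≤ p.2)
    (s₁ t₁ d₁ f₁ s₂ t₂ d₂ f₂ B₁ B₂ C₁ C₂ : ℝ)
    (hs₁ : s₁ = 1) (hs₂ : s₂ = 1)
    (ht₁ : 0 ≤ t₁) (ht₂ : 0 ≤ t₂)
    (hmem₁ : (d₁, f₁) ∈ X)
    (hopt₁ : ∀ p ∈ X,
      (1 + t₁) * d₁ + (1 - s₁) * f₁ ≤ (1 + t₁) * p.1 + (1 - s₁) * p.2)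
    (hmem₂ : (d₂, f₂) ∈ X)
    (hopt₂ : ∀ p ∈ X,
      (1 + t₂) * d₂ + (1 - s₂) * f₂ ≤ (1 + t₂) * p.1 + (1 - s₂) * p.2)
    (hB₁ : s₁ * f₁ - t₁ * d₁ = B₁)
    (hB₂ : s₂ * f₂ - t₂ * d₂ = B₂)
    (hBlt : B₁ < B₂)
    (hdet : f₁ = f₂)
    (hC₁ : C₁ = (1 + t₁) * d₁ + (1 - s₁) * f₁)
    (hC₂ : C₂ = (1 + t₂) * d₂ + (1 - s₂) * f₂) :
    d₁ = d₂ ∧ B₁ + C₁ = B₂ + C₂ ∧ (0 < d₁ → t₂ < t₁) :=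
  stmt11_general X s₁ t₁ d₁ f₁ s₂ t₂ d₂ f₂ B₁ B₂ C₁ C₂ hs₁ hs₂ ht₁ ht₂ hmem₁ hopt₁ hmem₂ hopt₂ hB₁
    hB₂ hBlt hdet hC₁ hC₂
end
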